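/- Let G = K₈ + Q, where Q is the complement of the circulant graph on Z₁₃ with connection set {±1, ±5} and + denotes the graph join. Suppose the edges of G are 2-colored blue and red with no blue triangle and no red 5-clique. Then for every vertex v of the K₈ part, cl(G[A₁(v)]) + cl(G[A₂(v)]) ≤ 5, where A_i(v) is the set of vertices of Q joined to v by an edge of color i. -/

import Mathlib

open SimpleGraph

/-- The join of two graphs: all vertices of `G₁` are joined to all of `G₂`. -/
def graphJoin {V W : Type*} (G₁ : SimpleGraph V) (G₂ : SimpleGraph W) :
    SimpleGraph (V ⊕ W) where
  Adj x y :=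
    match x, y with
    | Sum.inl a, Sum.inl b => G₁.Adj a b
    | Sum.inr a, Sum.inr b => G₂.Adj a b
    | Sum.inl _, Sum.inr _ => True
    | Sum.inr _, Sum.inl _ => True
  symm := ⟨fun x y => by cases x <;> cases y <;> simp [SimpleGraph.adj_comm]⟩
  loopless := ⟨fun x => by cases x <;> simp⟩

/-- The Greenwood–Gleason graph `Q`: the complement of the circulant graph on
`ℤ/13` with connection set `{±1, ±5}`. -/
def Q : SimpleGraph (ZMod 13) :=
  (SimpleGraph.circulantGraph {1, -1, 5, -5})ᶜ

/-- `G = K₈ + Q`. -/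
def G : SimpleGraph (Fin 8 ⊕ ZMod 13) :=
  graphJoin (⊤ : SimpleGraph (Fin 8)) Q

/-- A clique of `H` all of whose edges receive color `i` (blue = 0, red = 1). -/
def MonoClique {V : Type*} (H : SimpleGraph V) (c : Sym2 V → Fin 2) (i : Fin 2)
    (n : ℕ) (s : Finset V) : Prop :=
  H.IsNClique n s ∧ ∀ x ∈ s, ∀ y ∈ s, x ≠ y → c s(x, y) = i

/-- `A_i(v)`: vertices of the `Q`-part joined to `inl v` by an edge of color `i`. -/
def A (c : Sym2 (Fin 8 ⊕ ZMod 13) → Fin 2) (v : Fin 8) (i : Fin 2) :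
    Set (Fin 8 ⊕ ZMod 13) :=
  {w | ∃ x : ZMod 13, w = Sum.inr x ∧ c s(Sum.inl v, w) = i}

/-!
Fix `v` in the `K₈` part and split the other seven vertices of `K₈` into the set `B` joined to `v`
in blue and the set `R` joined to `v` in red. A clique of `G[A₁(v)]` together with `B` is a clique
of `G` in the blue neighbourhood of `v`; with no blue triangle all its edges are red, so it has at
most `4` vertices. A clique of `G[A₂(v)]` together with `R` lies in the red neighbourhood of `v`,
which has no blue triangle and no red `K₄`, so by `R(3,4) = 9` it has at most `8` vertices.
Hence `cl(G[A₁(v)]) + cl(G[A₂(v)]) ≤ 12 - |B| - |R| = 5`.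
-/

open Finset

namespace SimpleGraph

section Ramsey

variable {V : Type*} {K : SimpleGraph V}

lemma IsClique.card_lt_of_cliqueFreeOn {s : Finset V} {n : ℕ} (hs : K.IsClique (s : Set V))
    (h : K.CliqueFreeOn s n) : #s < n := by
  by_contra! hn
  obtain ⟨t, hts, rfl⟩ := exists_subset_card_eq hn
  exact h (coe_subset.2 hts) ⟨hs.subset (coe_subset.2 hts), rfl⟩

lemma induce_compl (s : Set V) : (K.induce s)ᶜ = Kᶜ.induce s := by
  ext x y
  simp [Subtype.ext_iff]

lemma cliqueFree_compl_induce_iff (s : Set V) (n : ℕ) :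
    (K.induce s)ᶜ.CliqueFree n ↔ Kᶜ.CliqueFreeOn s n := by
  rw [induce_compl, cliqueFree_induce_iff]

lemma degree_lt_of_cliqueFree_three {n : ℕ} (h3 : K.CliqueFree 3) (hn : Kᶜ.CliqueFree n) (v : V)
    [Fintype (K.neighborSet v)] : K.degree v < n := by
  have hfree : K.CliqueFreeOn (K.neighborFinset v) 2 := by
    simpa using CliqueFreeOn.of_succ _ (h3.cliqueFreeOn (s := Set.univ)) (Set.mem_univ v)
  have hcl : Kᶜ.IsClique (K.neighborFinset v : Set V) := fun x hx y hy hxy =>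
    ⟨hxy, (cliqueFreeOn_two _).1 hfree hx hy hxy⟩
  rw [← card_neighborFinset_eq_degree]
  exact hcl.card_lt_of_cliqueFreeOn hn.cliqueFreeOn

theorem card_le_five_of_cliqueFree [Fintype V] (h3 : K.CliqueFree 3) (hc3 : Kᶜ.CliqueFree 3) :
    Fintype.card V ≤ 5 := by
  classical
  rcases isEmpty_or_nonempty V with hV | ⟨⟨v⟩⟩
  · simp
  have hK := degree_lt_of_cliqueFree_three h3 hc3 v
  have hKc := degree_lt_of_cliqueFree_three hc3 (by rwa [compl_compl]) v
  have := K.degree_compl v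
  have := K.degree_lt_card_verts v
  omega

theorem card_le_eight_of_cliqueFree [Fintype V] (h3 : K.CliqueFree 3) (h4 : Kᶜ.CliqueFree 4) :
    Fintype.card V ≤ 8 := by
  classical
  have hdeg (v : V) : K.degree v ≤ 3 := Nat.lt_succ_iff.1 (degree_lt_of_cliqueFree_three h3 h4 v)
  have hdeg_compl (v : V) : Kᶜ.degree v ≤ 5 := by
    rw [← card_neighborSet_eq_degree]
    refine card_le_five_of_cliqueFree (K := K.induce (Kᶜ.neighborSet v))
      ((cliqueFree_induce_iff _ _ _).2 h3.cliqueFreeOn) ?_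
    rw [cliqueFree_compl_induce_iff]
    simpa using CliqueFreeOn.of_succ _ (h4.cliqueFreeOn (s := Set.univ)) (Set.mem_univ v)
  by_contra! hcard
  have hreg (v : V) : K.degree v = 3 := by
    have := K.degree_compl v
    have := hdeg v
    have := hdeg_compl v
    omega
  -- a `3`-regular graph on `9` vertices would have odd degree sum
  have hnine : Fintype.card V = 9 := by
    obtain ⟨v⟩ : Nonempty V := Fintype.card_pos_iff.1 (by omega)
    have := K.degree_compl v
    have := hdeg_compl v
    have := hreg v
    omega
  have := K.sum_degrees_eq_twice_card_edges
  simp only [hreg, sum_const, card_univ, smul_eq_mul] at this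
  omega

theorem card_le_eight_of_cliqueFreeOn (s : Finset V) (h3 : K.CliqueFreeOn s 3)
    (h4 : Kᶜ.CliqueFreeOn s 4) : #s ≤ 8 := by
  rw [← Fintype.card_coe]
  exact card_le_eight_of_cliqueFree ((cliqueFree_induce_iff _ _ _).2 h3)
    ((cliqueFree_compl_induce_iff _ _).2 h4)

end Ramsey
section Coloring

variable {V : Type*} (c : Sym2 V → Fin 2)

def colorGraph (i : Fin 2) : SimpleGraph V where
  Adj x y := x ≠ y ∧ c s(x, y) = i
  symm := ⟨fun _ _ h => ⟨h.1.symm, Sym2.eq_swap ▸ h.2⟩⟩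
  loopless := ⟨fun _ h => h.1 rfl⟩

lemma colorGraph_one_eq_compl : colorGraph c 1 = (colorGraph c 0)ᶜ := by
  ext x y
  have := Fin.eq_one_of_ne_zero (c s(x, y))
  simp only [colorGraph, compl_adj]
  grind

def colorNeighborSet (H : SimpleGraph V) (v : V) (i : Fin 2) : Set V :=
  {w | H.Adj v w ∧ c s(v, w) = i}

variable {c} {H : SimpleGraph V} {i : Fin 2} {n : ℕ} {W : Finset V} {v : V}

lemma cliqueFreeOn_colorGraph (h : ¬ ∃ s, MonoClique H c i n s) (hW : H.IsClique (W : Set V)) :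
    (colorGraph c i).CliqueFreeOn W n := fun t ht htc =>
  h ⟨t, ⟨hW.subset ht, htc.card_eq⟩, fun _ hx _ hy hxy => (htc.isClique hx hy hxy).2⟩

lemma cliqueFreeOn_colorGraph_of_subset_colorNeighborSet
    (h : ¬ ∃ s, MonoClique H c i (n + 1) s) (hW : H.IsClique (W : Set V))
    (hWv : (W : Set V) ⊆ colorNeighborSet c H v i) : (colorGraph c i).CliqueFreeOn W n := by
  classical
  have hvW : H.IsClique (insert v W : Finset V) := by
    rw [coe_insert]
    exact hW.insert fun w hw _ => (hWv hw).1
  refine CliqueFreeOn.subset _ (fun w hw => ?_)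
    (CliqueFreeOn.of_succ _ (cliqueFreeOn_colorGraph h hvW) (mem_insert_self v W))
  exact ⟨mem_insert_of_mem hw, (hWv hw).1.ne, (hWv hw).2⟩

lemma IsClique.card_lt_of_subset_colorNeighborSet_zero (hblue : ¬ ∃ s, MonoClique H c 0 3 s)
    (hred : ¬ ∃ s, MonoClique H c 1 n s) (hW : H.IsClique (W : Set V))
    (hWv : (W : Set V) ⊆ colorNeighborSet c H v 0) : #W < n := by
  have hnoblue := cliqueFreeOn_colorGraph_of_subset_colorNeighborSet hblue hW hWv
  have hredW : (colorGraph c 1).IsClique (W : Set V) := by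
    rw [colorGraph_one_eq_compl]
    exact fun x hx y hy hxy => ⟨hxy, (cliqueFreeOn_two _).1 hnoblue hx hy hxy⟩
  exact hredW.card_lt_of_cliqueFreeOn (cliqueFreeOn_colorGraph hred hW)

lemma IsClique.card_le_eight_of_subset_colorNeighborSet_one (hblue : ¬ ∃ s, MonoClique H c 0 3 s)
    (hred : ¬ ∃ s, MonoClique H c 1 5 s) (hW : H.IsClique (W : Set V))
    (hWv : (W : Set V) ⊆ colorNeighborSet c H v 1) : #W ≤ 8 :=
  card_le_eight_of_cliqueFreeOn W (cliqueFreeOn_colorGraph hblue hW)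
    (colorGraph_one_eq_compl c ▸ cliqueFreeOn_colorGraph_of_subset_colorNeighborSet hred hW hWv)

end Coloring

end SimpleGraph

lemma exists_isClique_subset_colorNeighborSet (c : Sym2 (Fin 8 ⊕ ZMod 13) → Fin 2) (v : Fin 8)
    (i : Fin 2) (P : Finset (Fin 8)) (hP : ∀ u ∈ P, u ≠ v ∧ c s(.inl v, .inl u) = i)
    (s : Finset (A c v i)) (hs : G.IsClique (s.map (.subtype _) : Set (Fin 8 ⊕ ZMod 13))) :
    ∃ W : Finset (Fin 8 ⊕ ZMod 13), #W = #P + #s ∧ G.IsClique (W : Set _) ∧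
      (W : Set _) ⊆ colorNeighborSet c G (.inl v) i := by
  classical
  have hs_inr : ∀ w ∈ s.map (.subtype _), ∃ x, w = .inr x := by
    simp only [mem_map, Function.Embedding.subtype_apply]
    rintro _ ⟨⟨w, x, rfl, -⟩, -, rfl⟩
    exact ⟨x, rfl⟩
  refine ⟨P.map .inl ∪ s.map (.subtype _), ?_, ?_, ?_⟩
  · rw [card_union_of_disjoint, card_map, card_map]
    rw [Finset.disjoint_left]
    rintro _ hw hw'
    obtain ⟨u, -, rfl⟩ := mem_map.1 hw
    obtain ⟨x, hx⟩ := hs_inr _ hw'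
    cases hx
  · have : Std.Symm G.Adj := G.symm
    rw [coe_union, IsClique, Set.pairwise_union_of_symm]
    refine ⟨?_, hs, ?_⟩
    · simp [Set.Pairwise, G, graphJoin]
    · intro a ha b hb _
      obtain ⟨u, -, rfl⟩ := mem_map.1 ha
      obtain ⟨x, rfl⟩ := hs_inr _ hb
      trivial
  · intro w hw
    rcases mem_union.1 hw with hw | hw
    · obtain ⟨u, hu, rfl⟩ := mem_map.1 hw
      exact ⟨(hP u hu).1.symm, (hP u hu).2⟩
    · obtain ⟨⟨_, x, rfl, hx⟩, -, rfl⟩ := mem_map.1 hw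
      exact ⟨trivial, hx⟩

theorem stmt11 (c : Sym2 (Fin 8 ⊕ ZMod 13) → Fin 2)
    (hblue : ¬ ∃ s, MonoClique G c 0 3 s)
    (hred : ¬ ∃ s, MonoClique G c 1 5 s) (v : Fin 8) :
    (G.induce (A c v 0)).cliqueNum + (G.induce (A c v 1)).cliqueNum ≤ 5 := by
  classical
  obtain ⟨s, hs⟩ := (G.induce (A c v 0)).exists_isNClique_cliqueNum
  obtain ⟨t, ht⟩ := (G.induce (A c v 1)).exists_isNClique_cliqueNum
  set B := (univ.erase v).filter fun u => c s(.inl v, .inl u) = 0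
  set R := (univ.erase v).filter fun u => c s(.inl v, .inl u) ≠ 0
  have hBR : #B + #R = 7 := by
    rw [card_filter_add_card_filter_not]
    simp
  obtain ⟨W₀, hW₀card, hW₀, hW₀v⟩ := exists_isClique_subset_colorNeighborSet c v 0 B
    (fun u hu => by simp_all [B]) s ((isNClique_induce_iff _ _ _).1 hs).isClique
  obtain ⟨W₁, hW₁card, hW₁, hW₁v⟩ := exists_isClique_subset_colorNeighborSet c v 1 R
    (fun u hu => by simp_all [R, Fin.eq_one_of_ne_zero]) t
    ((isNClique_induce_iff _ _ _).1 ht).isClique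
  have h₀ := hW₀.card_lt_of_subset_colorNeighborSet_zero hblue hred hW₀v
  have h₁ := hW₁.card_le_eight_of_subset_colorNeighborSet_one hblue hred hW₁v
  rw [← hs.card_eq, ← ht.card_eq]
  omega
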